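/- Approximation of e^{T(U)} by the exponential of the ε-circulant perturbation: if T(U) is a subgenerator and C_ε(U) = T(U) + εL (with L the strictly lower block-Toeplitz part), then ‖e^{T(U)} − e^{C_ε(U)}‖_∞ ≤ e^{|ε|·‖L‖_∞} − 1 for any complex ε. -/

import Mathlib

attribute [local instance] Matrix.linftyOpNormedAddCommGroup Matrix.linftyOpNormedSpace

/-- A subgenerator: nonnegative off-diagonal entries and nonpositive row sums. -/
def IsSubgenerator {k : Type*} [Fintype k] [DecidableEq k] (Q : Matrix k k ℝ) : Prop :=
  (∀ i j, i ≠ j → 0 ≤ Q i j) ∧ ∀ i, ∑ j, Q i j ≤ 0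

/-- The block upper-triangular block-Toeplitz matrix with first block row
`[U 0, U 1, …, U (n-1)]`. -/
def blockToeplitz {n m : ℕ} {α : Type*} [Zero α] (U : Fin n → Matrix (Fin m) (Fin m) α) :
    Matrix (Fin n × Fin m) (Fin n × Fin m) α := fun p q =>
  if h : (p.1 : ℕ) ≤ (q.1 : ℕ) then
    U ⟨(q.1 : ℕ) - (p.1 : ℕ), by have := q.1.isLt; omega⟩ p.2 q.2
  else 0

/-- The strictly lower block-Toeplitz part `L`: block `(i,j)` is `U (n+j−i)` for `j < i`
and `0` for `j ≥ i`, so that `C_ε(U) = T(U) + ε L`. -/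
def strictLowerPart {n m : ℕ} {α : Type*} [Zero α] (U : Fin n → Matrix (Fin m) (Fin m) α) :
    Matrix (Fin n × Fin m) (Fin n × Fin m) α := fun p q =>
  if h : (q.1 : ℕ) < (p.1 : ℕ) then
    U ⟨n + (q.1 : ℕ) - (p.1 : ℕ), by have := p.1.isLt; omega⟩ p.2 q.2
  else 0

section Aux

open NormedSpace
attribute [local instance] Matrix.linftyOpNormedRing Matrix.linftyOpNormedAlgebra

variable {k : Type*} [Fintype k] [DecidableEq k]

theorem matrix_entry_norm_le (M : Matrix k k ℝ) (i j : k) : ‖M i j‖ ≤ ‖M‖ := by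
  rw [Matrix.linfty_opNorm_def]
  have h1 : ‖M i j‖₊ ≤ ∑ j', ‖M i j'‖₊ :=
    Finset.single_le_sum (f := fun j' => ‖M i j'‖₊) (fun _ _ => zero_le) (Finset.mem_univ j)
  have h2 : (∑ j', ‖M i j'‖₊) ≤ Finset.univ.sup fun i => ∑ j, ‖M i j‖₊ :=
    Finset.le_sup (f := fun i => ∑ j, ‖M i j‖₊) (Finset.mem_univ i)
  exact_mod_cast h1.trans h2

theorem matrix_norm_le_of_rows (M : Matrix k k ℝ) {a : ℝ} (ha : 0 ≤ a)
    (h : ∀ i, ∑ j, ‖M i j‖ ≤ a) : ‖M‖ ≤ a := by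
  rw [Matrix.linfty_opNorm_def]
  rw [show a = ((⟨a, ha⟩ : NNReal) : ℝ) from rfl]
  refine NNReal.coe_le_coe.mpr (Finset.sup_le fun i _ => ?_)
  refine NNReal.coe_le_coe.mp ?_
  push_cast
  exact h i

theorem subgenerator_norm_exp_le {Q : Matrix k k ℝ} (hQ : IsSubgenerator Q) :
    ‖exp Q‖ ≤ 1 := by
  obtain ⟨hoff, hrow⟩ := hQ
  set c : ℝ := ‖Q‖ with hc
  have hc0 : 0 ≤ c := norm_nonneg Q
  set P : Matrix k k ℝ := Q + c • (1 : Matrix k k ℝ) with hP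
  have hP0 : ∀ i j, 0 ≤ P i j := by
    intro i j
    rcases eq_or_ne i j with h | h
    · subst h
      have : |Q i i| ≤ c := by simpa [Real.norm_eq_abs] using matrix_entry_norm_le Q i i
      have := abs_le.mp this
      simp [hP, Matrix.add_apply, Matrix.smul_apply, Matrix.one_apply]
      linarith [this.1]
    · have := hoff i j h
      simp [hP, Matrix.add_apply, Matrix.smul_apply, Matrix.one_apply, h]
      linarith
  have hProw : ∀ i, ∑ j, P i j ≤ c := by
    intro i
    have : ∑ j, P i j = (∑ j, Q i j) + c := by
      simp [hP, Matrix.add_apply, Matrix.smul_apply, Matrix.one_apply, Finset.sum_add_distrib,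
        Finset.sum_ite_eq]
    rw [this]
    linarith [hrow i]
  have hpow : ∀ N : ℕ, (∀ i j, 0 ≤ (P ^ N) i j) ∧ ∀ i, ∑ j, (P ^ N) i j ≤ c ^ N := by
    intro N
    induction N with
    | zero =>
      constructor
      · intro i j; simp [Matrix.one_apply]; positivity
      · intro i; simp [Matrix.one_apply]
    | succ N ih =>
      have hmul : ∀ i j, (P ^ (N + 1)) i j = ∑ l, (P ^ N) i l * P l j := by
        intro i j; rw [pow_succ, Matrix.mul_apply]
      constructor
      · intro i j
        rw [hmul]
        exact Finset.sum_nonneg fun l _ => mul_nonneg (ih.1 i l) (hP0 l j)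
      · intro i
        calc ∑ j, (P ^ (N + 1)) i j = ∑ l, (P ^ N) i l * ∑ j, P l j := by
              simp_rw [hmul]
              rw [Finset.sum_comm]
              simp_rw [Finset.mul_sum]
          _ ≤ ∑ l, (P ^ N) i l * c :=
              Finset.sum_le_sum fun l _ => mul_le_mul_of_nonneg_left (hProw l) (ih.1 i l)
          _ = (∑ l, (P ^ N) i l) * c := by rw [Finset.sum_mul]
          _ ≤ c ^ N * c := mul_le_mul_of_nonneg_right (ih.2 i) hc0
          _ = c ^ (N + 1) := (pow_succ c N).symm
  -- entrywise hasSum for exp P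
  have hsum : HasSum (fun N : ℕ => (N.factorial⁻¹ : ℝ) • P ^ N) (exp P) := by
    rw [exp_eq_tsum ℝ]
    exact (expSeries_summable' (𝕂 := ℝ) P).hasSum
  have hentry : ∀ i j, HasSum (fun N : ℕ => (N.factorial⁻¹ : ℝ) * (P ^ N) i j) ((exp P) i j) := by
    intro i j
    let φ : Matrix k k ℝ →ₗ[ℝ] ℝ :=
      { toFun := fun M => M i j, map_add' := fun _ _ => rfl, map_smul' := fun _ _ => rfl }
    have := (LinearMap.toContinuousLinearMap φ).hasSum hsum
    exact this
  have hexpentry_nonneg : ∀ i j, 0 ≤ (exp P) i j := by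
    intro i j
    refine hasSum_le (fun N => ?_) hasSum_zero (hentry i j)
    exact mul_nonneg (by positivity) ((hpow N).1 i j)
  have hexprow : ∀ i, ∑ j, (exp P) i j ≤ Real.exp c := by
    intro i
    have hrow : HasSum (fun N : ℕ => ∑ j, (N.factorial⁻¹ : ℝ) * (P ^ N) i j)
        (∑ j, (exp P) i j) := hasSum_sum fun j _ => hentry i j
    have hexp : HasSum (fun N : ℕ => (N.factorial⁻¹ : ℝ) * c ^ N) (Real.exp c) := by
      have h := (expSeries_summable' (𝕂 := ℝ) c).hasSum
      have h2 : exp c = ∑' n : ℕ, (n.factorial⁻¹ : ℝ) • c ^ n := congrFun (exp_eq_tsum ℝ) c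
      rw [Real.exp_eq_exp_ℝ, h2]
      simpa [smul_eq_mul] using h
    refine hasSum_le (fun N => ?_) hrow hexp
    rw [← Finset.mul_sum]
    exact mul_le_mul_of_nonneg_left ((hpow N).2 i) (by positivity)
  have hexpP_norm : ‖exp P‖ ≤ Real.exp c := by
    refine matrix_norm_le_of_rows _ (Real.exp_nonneg c) fun i => ?_
    calc ∑ j, ‖(exp P) i j‖ = ∑ j, (exp P) i j := by
          refine Finset.sum_congr rfl fun j _ => ?_
          rw [Real.norm_eq_abs, abs_of_nonneg (hexpentry_nonneg i j)]
      _ ≤ Real.exp c := hexprow i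
  have hQeq : Q = P + (-c) • (1 : Matrix k k ℝ) := by
    rw [hP]; module
  have hcomm : Commute P ((-c) • (1 : Matrix k k ℝ)) := (Commute.one_right P).smul_right (-c)
  have hsplit : exp Q = exp P * exp ((-c) • (1 : Matrix k k ℝ)) := by
    rw [hQeq]; exact exp_add_of_commute hcomm
  have hscal : exp ((-c) • (1 : Matrix k k ℝ)) = Real.exp (-c) • (1 : Matrix k k ℝ) := by
    have h1 : ((-c) • (1 : Matrix k k ℝ)) = algebraMap ℝ (Matrix k k ℝ) (-c) := by
      rw [Algebra.algebraMap_eq_smul_one]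
    rw [h1, Real.exp_eq_exp_ℝ, ← Algebra.algebraMap_eq_smul_one]; exact (algebraMap_exp_comm (-c)).symm
  calc ‖exp Q‖ = ‖Real.exp (-c) • exp P‖ := by
        rw [hsplit, hscal, mul_smul_comm, mul_one]
    _ = Real.exp (-c) * ‖exp P‖ := by
        rw [norm_smul, Real.norm_eq_abs, abs_of_nonneg (Real.exp_nonneg _)]
    _ ≤ Real.exp (-c) * Real.exp c :=
        mul_le_mul_of_nonneg_left hexpP_norm (Real.exp_nonneg _)
    _ = 1 := by rw [← Real.exp_add]; simp
theorem matrix_norm_map_coe (M : Matrix k k ℝ) : ‖M.map (fun r => (r : ℂ))‖ = ‖M‖ := by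
  rw [Matrix.linfty_opNorm_def, Matrix.linfty_opNorm_def]
  norm_cast
  congr 1
  funext i
  congr 1
  funext j
  simp [Matrix.map_apply]

theorem matrix_map_exp (M : Matrix k k ℝ) :
    (exp M).map (fun r => (r : ℂ)) = exp (M.map (fun r => (r : ℂ))) := by
  have hiso : Isometry fun N : Matrix k k ℝ => N.map (fun r => (r : ℂ)) := by
    have : ∀ N : Matrix k k ℝ, ‖(Complex.ofRealHom : ℝ →+* ℂ).mapMatrix N‖ = ‖N‖ := by
      intro N
      exact matrix_norm_map_coe N
    exact
      AddMonoidHomClass.isometry_of_norm (Complex.ofRealHom : ℝ →+* ℂ).mapMatrix this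
  have := map_exp (Complex.ofRealHom : ℝ →+* ℂ).mapMatrix hiso.continuous M
  exact this
theorem exp_perturb_core (A B : Matrix k k ℂ)
    (hA : ∀ u : ℝ, 0 ≤ u → ‖exp (u • A)‖ ≤ 1) :
    ‖exp A - exp (A + B)‖ ≤ Real.exp ‖B‖ - 1 := by
  set K : ℝ := ‖B‖ with hK
  have hK0 : 0 ≤ K := norm_nonneg B
  set φ : ℝ → ℝ := fun t => ‖exp (t • (A + B))‖ with hφ
  have hφc : Continuous φ :=
    (exp_continuous.comp (continuous_id.smul continuous_const)).norm
  have hφnn : ∀ t, 0 ≤ φ t := fun t => norm_nonneg _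
  -- the Duhamel derivative
  have hderiv : ∀ s t : ℝ,
      HasDerivAt (fun u : ℝ => exp ((s - u) • A) * exp (u • (A + B)))
        (exp ((s - t) • A) * B * exp (t • (A + B))) t := by
    intro s t
    have h2 : HasDerivAt (fun u : ℝ => exp (u • (A + B)))
        ((A + B) * exp (t • (A + B))) t := hasDerivAt_exp_smul_const' (A + B) t
    have hst : HasDerivAt (fun u : ℝ => s - u) (-1) t := (hasDerivAt_id t).const_sub s
    have h1 : HasDerivAt (fun u : ℝ => exp (u • A)) (A * exp ((s - t) • A)) (s - t) :=
      hasDerivAt_exp_smul_const' A (s - t)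
    have h1' : HasDerivAt (fun u : ℝ => exp ((s - u) • A))
        ((-1 : ℝ) • (A * exp ((s - t) • A))) t := h1.scomp t hst
    have h3 := h1'.mul h2
    refine HasDerivAt.congr_deriv h3 ?_
    have hAe : A * exp ((s - t) • A) = exp ((s - t) • A) * A :=
      ((Commute.refl A).smul_right (s - t)).exp_right
    rw [neg_one_smul, hAe]
    noncomm_ring
  have hcint : ∀ s : ℝ, Continuous fun t : ℝ =>
      exp ((s - t) • A) * B * exp (t • (A + B)) := by
    intro s
    have c1 : Continuous fun t : ℝ => exp ((s - t) • A) :=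
      exp_continuous.comp ((continuous_const.sub continuous_id).smul continuous_const)
    have c2 : Continuous fun t : ℝ => exp (t • (A + B)) :=
      exp_continuous.comp (continuous_id.smul continuous_const)
    exact (c1.mul continuous_const).mul c2
  -- the Duhamel formula
  have key : ∀ s : ℝ, exp (s • (A + B)) - exp (s • A) =
      ∫ t in (0:ℝ)..s, exp ((s - t) • A) * B * exp (t • (A + B)) := by
    intro s
    have := intervalIntegral.integral_eq_sub_of_hasDerivAt
      (f := fun u : ℝ => exp ((s - u) • A) * exp (u • (A + B)))
      (fun t _ => hderiv s t) ((hcint s).intervalIntegrable 0 s)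
    rw [this]
    simp [sub_self, zero_smul, exp_zero]
  -- integrand norm bound
  have hnb : ∀ s t : ℝ, t ≤ s →
      ‖exp ((s - t) • A) * B * exp (t • (A + B))‖ ≤ K * φ t := by
    intro s t hts
    calc ‖exp ((s - t) • A) * B * exp (t • (A + B))‖
        ≤ ‖exp ((s - t) • A) * B‖ * φ t := norm_mul_le _ _
      _ ≤ ‖exp ((s - t) • A)‖ * K * φ t := by
          exact mul_le_mul_of_nonneg_right (norm_mul_le _ _) (hφnn t)
      _ ≤ 1 * K * φ t := by
          have := hA (s - t) (by linarith)
          gcongr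
      _ = K * φ t := by ring
  -- φ s ≤ 1 + K * ∫ φ
  have φbound1 : ∀ s ∈ Set.Icc (0:ℝ) 1, φ s ≤ 1 + K * ∫ t in (0:ℝ)..s, φ t := by
    intro s hs
    have h1 : exp (s • (A + B)) = exp (s • A) +
        ∫ t in (0:ℝ)..s, exp ((s - t) • A) * B * exp (t • (A + B)) := by
      rw [← key s]; abel
    have h2 : φ s ≤ ‖exp (s • A)‖ +
        ‖∫ t in (0:ℝ)..s, exp ((s - t) • A) * B * exp (t • (A + B))‖ := by
      have hna := norm_add_le (exp (s • A))
        (∫ t in (0:ℝ)..s, exp ((s - t) • A) * B * exp (t • (A + B)))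
      rw [← h1] at hna
      exact hna
    have h3 : ‖∫ t in (0:ℝ)..s, exp ((s - t) • A) * B * exp (t • (A + B))‖
        ≤ ∫ t in (0:ℝ)..s, K * φ t := by
      refine (intervalIntegral.norm_integral_le_integral_norm hs.1).trans ?_
      refine intervalIntegral.integral_mono_on hs.1
        ((hcint s).norm.intervalIntegrable 0 s)
        ((continuous_const.mul hφc).intervalIntegrable 0 s) ?_
      intro t ht
      exact hnb s t ht.2
    have h4 : (∫ t in (0:ℝ)..s, K * φ t) = K * ∫ t in (0:ℝ)..s, φ t := by
      exact intervalIntegral.integral_const_mul K φ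
    calc φ s ≤ ‖exp (s • A)‖ + ∫ t in (0:ℝ)..s, K * φ t := h2.trans (by linarith [h3])
      _ ≤ 1 + K * ∫ t in (0:ℝ)..s, φ t := by
          rw [h4]; exact add_le_add_left (hA s hs.1) _
  -- Gronwall
  set F : ℝ → ℝ := fun s => ∫ t in (0:ℝ)..s, φ t with hFdef
  have hF : ∀ s, HasDerivAt F (φ s) s := fun s =>
    (hφc.integral_hasStrictDerivAt 0 s).hasDerivAt
  have hFc : Continuous F := by
    refine continuous_iff_continuousAt.mpr fun s => (hF s).continuousAt
  have hFnn : ∀ s, 0 ≤ s → 0 ≤ F s := fun s hs =>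
    intervalIntegral.integral_nonneg hs fun t _ => hφnn t
  have gr := norm_le_gronwallBound_of_norm_deriv_right_le (f := F) (f' := φ)
    (δ := 0) (K := K) (ε := 1) (a := 0) (b := 1)
    hFc.continuousOn (fun x _ => (hF x).hasDerivWithinAt)
    (by simp [hFdef, intervalIntegral.integral_same])
    (fun x hx => by
      rw [Real.norm_of_nonneg (hφnn x), Real.norm_of_nonneg (hFnn x hx.1)]
      have := φbound1 x ⟨hx.1, le_of_lt hx.2⟩
      linarith)
  have hφexp : ∀ s ∈ Set.Icc (0:ℝ) 1, φ s ≤ Real.exp (K * s) := by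
    intro s hs
    have h1 := φbound1 s hs
    have h2 : F s ≤ gronwallBound 0 K 1 (s - 0) := by
      have := gr s hs
      rw [Real.norm_of_nonneg (hFnn s hs.1)] at this
      exact this
    rcases eq_or_ne K 0 with hK0' | hK0'
    · rw [hK0']
      simp only [zero_mul, Real.exp_zero]
      rw [hK0'] at h1; linarith
    · rw [gronwallBound_of_K_ne_0 hK0'] at h2
      have h3 : K * F s ≤ K * (0 * Real.exp (K * (s - 0)) + 1 / K * (Real.exp (K * (s - 0)) - 1)) :=
        mul_le_mul_of_nonneg_left h2 hK0
      have hKpos : 0 < K := lt_of_le_of_ne hK0 (Ne.symm hK0')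
      rw [sub_zero] at h3
      calc φ s ≤ 1 + K * F s := h1
        _ ≤ 1 + K * (0 * Real.exp (K * s) + 1 / K * (Real.exp (K * s) - 1)) := by linarith
        _ = Real.exp (K * s) := by field_simp; ring
  -- final estimate
  have hInt : (∫ t in (0:ℝ)..1, K * Real.exp (K * t)) = Real.exp K - 1 := by
    have hd : ∀ t : ℝ, HasDerivAt (fun u : ℝ => Real.exp (K * u)) (K * Real.exp (K * t)) t := by
      intro t
      have h := ((hasDerivAt_id t).const_mul K).exp
      simpa [mul_comm] using h
    rw [intervalIntegral.integral_eq_sub_of_hasDerivAt (fun t _ => hd t)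
      ((continuous_const.mul (Real.continuous_exp.comp (continuous_const.mul continuous_id))).intervalIntegrable 0 1)]
    simp
  have h5 : ‖exp A - exp (A + B)‖ =
      ‖∫ t in (0:ℝ)..1, exp ((1 - t) • A) * B * exp (t • (A + B))‖ := by
    rw [norm_sub_rev]
    rw [show exp (A + B) - exp A
        = exp ((1:ℝ) • (A + B)) - exp ((1:ℝ) • A) by rw [one_smul, one_smul]]
    rw [key 1]
  rw [h5, ← hInt]
  refine (intervalIntegral.norm_integral_le_integral_norm zero_le_one).trans ?_
  refine intervalIntegral.integral_mono_on zero_le_one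
    ((hcint 1).norm.intervalIntegrable 0 1)
    ((continuous_const.mul (Real.continuous_exp.comp (continuous_const.mul continuous_id))).intervalIntegrable 0 1) ?_
  intro t ht
  calc ‖exp ((1 - t) • A) * B * exp (t • (A + B))‖ ≤ K * φ t := hnb 1 t ht.2
    _ ≤ K * Real.exp (K * t) := mul_le_mul_of_nonneg_left (hφexp t ht) hK0

end Aux

open NormedSpace in

/-- If `T(U)` is a subgenerator then, for any complex `ε`,
`‖e^{T(U)} − e^{C_ε(U)}‖_∞ ≤ e^{|ε|·‖L‖_∞} − 1`, where `C_ε(U) = T(U) + εL`. -/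
theorem exp_epsCirculant_approx {n m : ℕ}
    (U : Fin n → Matrix (Fin m) (Fin m) ℝ)
    (hsub : IsSubgenerator (blockToeplitz U)) (ε : ℂ) :
    ‖(NormedSpace.exp (blockToeplitz U)).map (fun r => (r : ℂ)) -
        NormedSpace.exp
          ((blockToeplitz U).map (fun r => (r : ℂ)) +
            ε • (strictLowerPart U).map (fun r => (r : ℂ)))‖ ≤
      Real.exp (‖ε‖ * ‖strictLowerPart U‖) - 1 := by
  set T := blockToeplitz U with hT
  set A : Matrix (Fin n × Fin m) (Fin n × Fin m) ℂ := T.map (fun r => (r : ℂ)) with hAdef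
  set B : Matrix (Fin n × Fin m) (Fin n × Fin m) ℂ :=
    ε • (strictLowerPart U).map (fun r => (r : ℂ)) with hBdef
  have hA : ∀ u : ℝ, 0 ≤ u → ‖exp (u • A)‖ ≤ 1 := by
    intro u hu
    have hmap : u • A = (u • T).map (fun r => (r : ℂ)) := by
      ext p q
      simp [hAdef, Matrix.map_apply, Matrix.smul_apply, Complex.real_smul, Complex.ofReal_mul]
    rw [hmap, ← matrix_map_exp, matrix_norm_map_coe]
    refine subgenerator_norm_exp_le ⟨?_, ?_⟩
    · intro i j hij
      have h0 := hsub.1 i j hij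
      simp only [Matrix.smul_apply, smul_eq_mul]
      exact mul_nonneg hu h0
    · intro i
      have h0 := hsub.2 i
      simp only [Matrix.smul_apply, smul_eq_mul, ← Finset.mul_sum]
      exact mul_nonpos_iff.mpr (Or.inl ⟨hu, h0⟩)
  have hKeq : ‖B‖ = ‖ε‖ * ‖strictLowerPart U‖ := by
    rw [hBdef, norm_smul, matrix_norm_map_coe]
  have hgoalL : (exp T).map (fun r => (r : ℂ)) = exp A := matrix_map_exp T
  have hexpC : exp (A + B) = exp (A + B) := rfl
  rw [hgoalL, hexpC, ← hKeq]
  exact exp_perturb_core A B hA
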